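/- arXiv:1909.11716 — 2 statements merged into one kernel-verified Lean document; each statement's English description precedes it below -/
import Mathlib

section
/- A set of vertices {(e_i, e_j) : (i,j) ∈ S} of Δ_{n−1} × Δ_{n−1} is affinely independent if and only if the bipartite graph on {1,...,n} ⊔ {1,...,n} with edge set S is acyclic (a forest). -/
open BigOperators

/-- The vertex of Δ_{n−1} × Δ_{n−1} indexed by a pair (i,j): the point
(e_i, e_j) in ℝⁿ × ℝⁿ. -/
noncomputable def prodVertex (n : ℕ) (p : Fin n × Fin n) : (Fin n → ℝ) × (Fin n → ℝ) :=
  (Pi.single p.1 1, Pi.single p.2 1)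

/-- The bipartite graph on {1,…,n} ⊔ {1,…,n} whose edges are the pairs in S. -/
def bipartiteGraph (n : ℕ) (S : Set (Fin n × Fin n)) : SimpleGraph (Fin n ⊕ Fin n) :=
  SimpleGraph.fromRel (fun x y => ∃ i j, (i, j) ∈ S ∧ x = Sum.inl i ∧ y = Sum.inr j)

/-!
A relation `∑ W (i, j) • (e_i, e_j) = 0` is a weighting `W` of the edges of the bipartite graph
whose sum at every vertex vanishes; its total weight is then automatically zero, so affine and
linear dependence coincide. Along a cycle, the number of left-to-right traversals of an edge
minus the number of right-to-left ones is such a weighting, and it is nonzero. Conversely, in the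
support of a nonzero such weighting no vertex has degree one, so the endpoint of a longest path
has a second neighbour, which either extends the path or closes a cycle.
-/

open Finset Sum

theorem Fintype.exists_ne_ne_zero_of_sum_eq_zero {ι M : Type*} [Fintype ι] [AddCommMonoid M]
    {f : ι → M} (h : ∑ j, f j = 0) {i : ι} (hi : f i ≠ 0) : ∃ j ≠ i, f j ≠ 0 := by
  by_contra! hc
  exact hi (by rw [← h, Fintype.sum_eq_single i hc])

theorem Fintype.sum_subtype_eq_sum_of_notMem {ι M : Type*} [Fintype ι] [AddCommMonoid M]
    {S : Set ι} [Fintype S] {f : ι → M} (hf : ∀ q ∉ S, f q = 0) : ∑ e : S, f e = ∑ q, f q := by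
  classical
  rw [Finset.sum_set_coe]
  exact Finset.sum_subset (subset_univ _) fun q _ hq => hf q (by simpa using hq)

theorem affineIndependent_subtype_iff {k V κ : Type*} [Ring k] [AddCommGroup V] [Module k V]
    [Fintype κ] {S : Set κ} (f : κ → V) :
    AffineIndependent k (fun q : S => f q) ↔
      ∀ W : κ → k, (∀ q ∉ S, W q = 0) → ∑ q, W q = 0 → ∑ q, W q • f q = 0 → W = 0 := by
  classical
  rw [affineIndependent_iff]
  constructor
  · intro h W hW hsum hvec
    have hWf : ∀ q ∉ S, W q • f q = 0 := fun q hq => by rw [hW q hq, zero_smul]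
    funext q
    by_cases hq : q ∈ S
    · refine h univ (fun e => W e) ?_ ?_ ⟨q, hq⟩ (mem_univ _)
      · rwa [Fintype.sum_subtype_eq_sum_of_notMem (S := S) hW]
      · rwa [Fintype.sum_subtype_eq_sum_of_notMem (S := S) hWf]
    · exact hW q hq
  · intro h s w hsum hvec e he
    set W : κ → k := Function.extend Subtype.val (fun e => if e ∈ s then w e else 0) 0
    have hW : ∀ q ∉ S, W q = 0 := fun q hq =>
      Function.extend_apply' _ _ _ fun ⟨e, he⟩ => hq (he ▸ e.2)
    have hWf : ∀ q ∉ S, W q • f q = 0 := fun q hq => by rw [hW q hq, zero_smul]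
    have hWe : ∀ e : S, W e = if e ∈ s then w e else 0 := fun e =>
      Subtype.val_injective.extend_apply _ _ e
    have hW0 := h W hW
      (by rw [← Fintype.sum_subtype_eq_sum_of_notMem (S := S) hW]; simpa [hWe] using hsum)
      (by rw [← Fintype.sum_subtype_eq_sum_of_notMem (S := S) hWf]; simpa [hWe, ite_smul] using hvec)
    simpa [hWe, he] using congrFun hW0 e

namespace SimpleGraph

variable {V : Type*} {G : SimpleGraph V}

theorem not_isAcyclic_of_forall_adj_exists_ne [Finite V] {x y : V} (hxy : G.Adj x y)
    (h : ∀ u w, G.Adj u w → ∃ w', G.Adj u w' ∧ w' ≠ w) : ¬ G.IsAcyclic := by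
  intro hG
  have : Nonempty V := ⟨x⟩
  obtain ⟨u, v, p, hp, hmax⟩ := Walk.exists_isPath_forall_isPath_length_le_length G
  have hnil : ¬ p.Nil := by
    intro hn
    have := hmax _ _ _ (Walk.IsPath.nil.cons (u := x) (h := hxy) (by simpa using hxy.ne))
    simp [hn.length_eq_zero] at this
  obtain ⟨w, hadj, hne⟩ := h u p.snd (p.adj_snd hnil)
  by_cases hw : w ∈ p.support
  · exact hne (hG.eq_snd_of_adj_start hp hadj hw)
  · have := hmax _ _ _ (hp.cons hw (h := hadj.symm))
    simp at this

namespace Walk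

variable [DecidableEq V]

def netFlow {u v : V} (p : G.Walk u v) (x y : V) : ℤ :=
  (p.darts.map Dart.toProd).count (x, y) - (p.darts.map Dart.toProd).count (y, x)

variable {u v : V} (p : G.Walk u v)

theorem netFlow_swap (x y : V) : p.netFlow y x = -p.netFlow x y := by
  simp [netFlow]

theorem netFlow_eq_zero_of_not_adj {x y : V} (h : ¬ G.Adj x y) : p.netFlow x y = 0 := by
  have hnotMem : ∀ {a b}, ¬ G.Adj a b → (a, b) ∉ p.darts.map Dart.toProd := by
    rintro a b hab hmem
    obtain ⟨⟨_, hadj⟩, -, rfl⟩ := List.mem_map.mp hmem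
    exact hab hadj
  simp [netFlow, List.count_eq_zero.mpr (hnotMem h),
    List.count_eq_zero.mpr (hnotMem fun h' => h h'.symm)]

theorem sum_netFlow [Fintype V] (x : V) :
    ∑ y, p.netFlow x y = (if u = x then 1 else 0) - (if v = x then 1 else 0) := by
  induction p with
  | nil => simp [netFlow]
  | @cons u w v h p ih =>
    have hcons : ∀ y, (cons h p).netFlow x y = p.netFlow x y +
        ((if (u, w) = (x, y) then 1 else 0) - (if (u, w) = (y, x) then 1 else 0)) := by
      intro y
      simp only [netFlow, darts_cons, List.map_cons, List.count_cons, beq_iff_eq]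
      push_cast
      ring
    simp only [hcons, sum_add_distrib, sum_sub_distrib, ih, Prod.mk.injEq, ite_and, sum_ite_irrel,
      sum_ite_eq, mem_univ, if_true, sum_const_zero]
    ring

theorem IsTrail.netFlow_ne_zero {p : G.Walk u v} (hp : p.IsTrail) {d : G.Dart}
    (hd : d ∈ p.darts) : p.netFlow d.fst d.snd ≠ 0 := by
  have hpos : 0 < (p.darts.map Dart.toProd).count (d.fst, d.snd) :=
    List.count_pos_iff.mpr (List.mem_map_of_mem hd)
  have hrev : (p.darts.map Dart.toProd).count (d.snd, d.fst) = 0 := by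
    refine List.count_eq_zero.mpr fun hmem => ?_
    obtain ⟨d', hd', hd'd⟩ := List.mem_map.mp hmem
    obtain rfl : d' = d.symm := (Dart.ext_iff _ _).mpr hd'd
    exact d.symm_ne (List.inj_on_of_nodup_map hp.edges_nodup hd' hd d.edge_symm)
  simp only [netFlow, hrev]
  omega

end Walk

end SimpleGraph

open SimpleGraph

section bipartiteGraph

variable {n : ℕ} {S T : Set (Fin n × Fin n)} {i j : Fin n}

@[simp] theorem bipartiteGraph_adj_inl_inr :
    (bipartiteGraph n S).Adj (inl i) (inr j) ↔ (i, j) ∈ S := by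
  simp [bipartiteGraph]

@[simp] theorem bipartiteGraph_adj_inr_inl :
    (bipartiteGraph n S).Adj (inr j) (inl i) ↔ (i, j) ∈ S := by
  simp [bipartiteGraph]

@[simp] theorem not_bipartiteGraph_adj_inl_inl {i' : Fin n} :
    ¬ (bipartiteGraph n S).Adj (inl i) (inl i') := by
  simp [bipartiteGraph]

@[simp] theorem not_bipartiteGraph_adj_inr_inr {j' : Fin n} :
    ¬ (bipartiteGraph n S).Adj (inr j) (inr j') := by
  simp [bipartiteGraph]

theorem bipartiteGraph_mono (h : S ⊆ T) : bipartiteGraph n S ≤ bipartiteGraph n T := by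
  rintro (i | j) (i' | j') <;> simp <;> exact (h ·)

theorem eq_zero_of_isAcyclic_bipartiteGraph {R : Type*} [AddCommMonoid R]
    {W : Fin n × Fin n → R} (hS : (bipartiteGraph n S).IsAcyclic) (hW : ∀ q ∉ S, W q = 0)
    (hrow : ∀ i, ∑ j, W (i, j) = 0) (hcol : ∀ j, ∑ i, W (i, j) = 0) : W = 0 := by
  by_contra hne
  obtain ⟨q, hq⟩ := Function.ne_iff.mp hne
  have hsupp : bipartiteGraph n {q | W q ≠ 0} ≤ bipartiteGraph n S :=
    bipartiteGraph_mono fun q hq => by_contra fun h => hq (hW q h)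
  refine not_isAcyclic_of_forall_adj_exists_ne (bipartiteGraph_adj_inl_inr.mpr hq) ?_
    (hS.anti hsupp)
  rintro (i | j) (i' | j') hadj <;>
    simp only [not_bipartiteGraph_adj_inl_inl, not_bipartiteGraph_adj_inr_inr,
      bipartiteGraph_adj_inl_inr, bipartiteGraph_adj_inr_inl, Set.mem_ofPred_eq] at hadj
  · obtain ⟨j, hj, hne⟩ := Fintype.exists_ne_ne_zero_of_sum_eq_zero (hrow i) hadj
    exact ⟨inr j, by simpa using hne, by simpa using hj⟩
  · obtain ⟨i, hi, hne⟩ := Fintype.exists_ne_ne_zero_of_sum_eq_zero (hcol j) hadj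
    exact ⟨inl i, by simpa using hne, by simpa using hi⟩

theorem exists_ne_zero_of_not_isAcyclic_bipartiteGraph {R : Type*} [Ring R] [CharZero R]
    (h : ¬ (bipartiteGraph n S).IsAcyclic) :
    ∃ W : Fin n × Fin n → R, W ≠ 0 ∧ (∀ q ∉ S, W q = 0) ∧
      (∀ i, ∑ j, W (i, j) = 0) ∧ ∀ j, ∑ i, W (i, j) = 0 := by
  obtain ⟨v, c, hc⟩ : ∃ v, ∃ c : (bipartiteGraph n S).Walk v v, c.IsCycle := by
    simpa only [IsAcyclic, not_forall, not_not] using h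
  have hflow : ∀ x, ∑ y, c.netFlow x y = 0 := fun x => by simp [Walk.sum_netFlow]
  have hrow : ∀ i, ∑ j, c.netFlow (inl i) (inr j) = 0 := fun i => by
    simpa [Fintype.sum_sum_type, Walk.netFlow_eq_zero_of_not_adj] using hflow (inl i)
  have hcol : ∀ j, ∑ i, c.netFlow (inl i) (inr j) = 0 := fun j => by
    simpa [Fintype.sum_sum_type, Walk.netFlow_eq_zero_of_not_adj, c.netFlow_swap (inl _) (inr j)]
      using hflow (inr j)
  refine ⟨fun q => c.netFlow (inl q.1) (inr q.2), ?_, fun q hq => ?_, fun i => ?_, fun j => ?_⟩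
  · obtain ⟨d, hd⟩ := List.exists_mem_of_ne_nil _ (Walk.darts_eq_nil.not.mpr hc.not_nil)
    have hne := hc.isTrail.netFlow_ne_zero hd
    obtain ⟨⟨i | j, i' | j'⟩, hadj⟩ := d <;> simp at hadj
    · exact Function.ne_iff.mpr ⟨(i, j'), by simpa using hne⟩
    · exact Function.ne_iff.mpr ⟨(i', j), by simpa [c.netFlow_swap (inr j)] using hne⟩
  · have : ¬ (bipartiteGraph n S).Adj (inl q.1) (inr q.2) := by simpa using hq
    simp [Walk.netFlow_eq_zero_of_not_adj _ this]
  · simp only [← Int.cast_sum, hrow i, Int.cast_zero]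
  · simp only [← Int.cast_sum, hcol j, Int.cast_zero]

end bipartiteGraph

theorem sum_smul_prodVertex_eq_zero_iff {n : ℕ} {W : Fin n × Fin n → ℝ} :
    ∑ q, W q • prodVertex n q = 0 ↔ (∀ i, ∑ j, W (i, j) = 0) ∧ ∀ j, ∑ i, W (i, j) = 0 := by
  simp [Prod.ext_iff, funext_iff, prodVertex, Prod.fst_sum, Prod.snd_sum, Fintype.sum_prod_type,
    Pi.single_apply]

/-- A set of vertices {(e_i, e_j) : (i,j) ∈ S} of Δ_{n−1} × Δ_{n−1} is affinely
independent iff the corresponding bipartite graph is acyclic (a forest). -/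
theorem affineIndependent_iff_acyclic (n : ℕ) (S : Set (Fin n × Fin n)) :
    AffineIndependent ℝ (fun q : S => prodVertex n q) ↔
      (bipartiteGraph n S).IsAcyclic := by
  simp only [affineIndependent_subtype_iff, sum_smul_prodVertex_eq_zero_iff]
  constructor
  · intro h
    by_contra hcyc
    obtain ⟨W, hW0, hS, hrow, hcol⟩ :=
      exists_ne_zero_of_not_isAcyclic_bipartiteGraph (R := ℝ) hcyc
    exact hW0 (h W hS (by simp [Fintype.sum_prod_type, hrow]) ⟨hrow, hcol⟩)
  · rintro hac W hS - ⟨hrow, hcol⟩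
    exact eq_zero_of_isAcyclic_bipartiteGraph hac hS hrow hcol
end

section
/- Let μ = (1/2, 1/7, 5/14) and let f(p) be the total variation distance between μ and the Hardy-Weinberg point (p², 2p(1−p), (1−p)²). Then f(p) ≥ √2 − 8/7 for all p ∈ [0,1]. -/
/-!
The three coordinates of `μ - HW(p)` sum to zero, so each one is bounded in absolute value by the
sum of the other two; hence the total variation distance dominates every single coordinate gap.
With `r = 1 - √2/2` (so `r² = 3/2 - √2` and `1 - r = 1/√2`), split `[0,1]` at `r` and `1 - r`:
on `[0, r]` use the first coordinate, `1/2 - p² ≥ 1/2 - r²`; on `[r, 1 - r]` the middle one,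
`2p(1-p) - 1/7 ≥ 2r(1-r) - 1/7`; on `[1 - r, 1]` the last, `5/14 - (1-p)² ≥ 5/14 - r²`.
The last two bounds both equal `√2 - 8/7`.
-/

theorem abs_le_half_sum_abs_of_add_add_eq_zero {α : Type*} [Field α] [LinearOrder α]
    [IsStrictOrderedRing α] {a b c : α} (h : a + b + c = 0) : |a| ≤ (|a| + |b| + |c|) / 2 := by
  have : |a| ≤ |b| + |c| := by
    rw [show a = -(b + c) by linear_combination h, abs_neg]
    exact abs_add_le b c
  linarith

theorem mul_one_sub_le_mul_one_sub {α : Type*} [CommRing α] [PartialOrder α]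
    [IsOrderedRing α] {r p : α} (hrp : r ≤ p) (hp : p ≤ 1 - r) :
    r * (1 - r) ≤ p * (1 - p) := by
  have : 0 ≤ (p - r) * (1 - r - p) := mul_nonneg (sub_nonneg.2 hrp) (sub_nonneg.2 hp)
  linear_combination this

/-- For μ = (1/2, 1/7, 5/14), the total variation distance to the
Hardy–Weinberg point (p², 2p(1−p), (1−p)²) is at least √2 − 8/7 for all
p ∈ [0,1]. -/
theorem tv_hardyWeinberg_lower_bound (p : ℝ) (hp : p ∈ Set.Icc (0 : ℝ) 1) :
    Real.sqrt 2 - 8 / 7 ≤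
      (1 / 2) * (|1 / 2 - p ^ 2| + |1 / 7 - 2 * p * (1 - p)|
        + |5 / 14 - (1 - p) ^ 2|) := by
  obtain ⟨hp0, hp1⟩ := hp
  have habc : (1 / 2 - p ^ 2) + (1 / 7 - 2 * p * (1 - p)) + (5 / 14 - (1 - p) ^ 2) = 0 := by ring
  set r := 1 - Real.sqrt 2 / 2 with hr_def
  have hr : r ^ 2 = 3 / 2 - Real.sqrt 2 := by
    rw [hr_def]; ring_nf; rw [Real.sq_sqrt zero_le_two]; ring
  rcases le_or_gt p r with hpr | hrp
  · have hsq : p ^ 2 ≤ r ^ 2 := pow_le_pow_left₀ hp0 hpr 2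
    have htv := abs_le_half_sum_abs_of_add_add_eq_zero habc
    linarith [le_abs_self (1 / 2 - p ^ 2)]
  rcases le_or_gt p (1 - r) with hpr' | hrp'
  · have hvar : r * (1 - r) ≤ p * (1 - p) := mul_one_sub_le_mul_one_sub hrp.le hpr'
    have htv := abs_le_half_sum_abs_of_add_add_eq_zero
      (show (1 / 7 - 2 * p * (1 - p)) + (1 / 2 - p ^ 2) + (5 / 14 - (1 - p) ^ 2) = 0 by linarith)
    linarith [neg_abs_le (1 / 7 - 2 * p * (1 - p))]
  · have hsq : (1 - p) ^ 2 ≤ r ^ 2 := pow_le_pow_left₀ (sub_nonneg.2 hp1) (by linarith) 2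
    have htv := abs_le_half_sum_abs_of_add_add_eq_zero
      (show (5 / 14 - (1 - p) ^ 2) + (1 / 2 - p ^ 2) + (1 / 7 - 2 * p * (1 - p)) = 0 by linarith)
    linarith [le_abs_self (5 / 14 - (1 - p) ^ 2)]
end
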